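/- arXiv:2211.10200 — 2 statements merged into one kernel-verified Lean document; each statement's English description precedes it below -/
import Mathlib

section
/- Suppose h ∈ 𝓗. Then for every ϑ ∈ Θ with ϑ ≤ ϑ₀ − δ, the Kullback–Leibler divergence J is differentiable at ϑ with J′(ϑ) = λ₀·ln(1 + S/λ₀) − S, and this value is strictly negative. -/
open MeasureTheory Real Set Filter

/-- The cusp signal shape: `ψ(x) = (x/δ)^κ` for `0 < x < δ`, `1` for `x ≥ δ`, `0` for `x ≤ 0`. -/
noncomputable def psi (δ κ : ℝ) (x : ℝ) : ℝ :=
  if δ ≤ x then 1 else if 0 < x then (x / δ) ^ κ else 0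

/-- Theoretical intensity `λ(ϑ, t) = S ψ(t − ϑ) + λ₀`. -/
noncomputable def lamT (S lam0 δ κ : ℝ) (ϑ t : ℝ) : ℝ :=
  S * psi δ κ (t - ϑ) + lam0

/-- Real intensity `λ*(ϑ₀, t) = (S + h) ψ(t − ϑ₀) + λ₀`. -/
noncomputable def lamR (S h lam0 δ κ : ℝ) (ϑ₀ t : ℝ) : ℝ :=
  (S + h) * psi δ κ (t - ϑ₀) + lam0

/-- The Kullback–Leibler divergence `J(ϑ)`. -/
noncomputable def JKL (S h lam0 δ κ τ ϑ₀ : ℝ) (ϑ : ℝ) : ℝ :=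
  ∫ t in (min ϑ ϑ₀)..τ,
    (lamT S lam0 δ κ ϑ t / lamR S h lam0 δ κ ϑ₀ t - 1 -
      Real.log (lamT S lam0 δ κ ϑ t / lamR S h lam0 δ κ ϑ₀ t)) *
      lamR S h lam0 δ κ ϑ₀ t

/-! Split `J(ϑ')`, `ϑ' ≤ ϑ₀`, at `ϑ₀`. On `[ϑ', ϑ₀]` the real intensity equals `λ₀`, so after the
shift `u = t - ϑ'` this part is `G(ϑ₀ - ϑ')` with `G(x) = ∫₀ˣ k(Sψ(u) + λ₀, λ₀) du`, where
`k(a, b) = (a/b - 1 - ln(a/b)) b`. On `[ϑ₀, τ]` the cusp of `λ(ϑ', ·)` is over when `ϑ' ≤ ϑ₀ - δ`,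
so this part is constant there; for `ϑ' = ϑ₀ - δ + ε` it differs from that constant only on an
interval of length `ε`, by `O(ε)` because `ψ(x) ≥ x/δ` (as `κ ≤ 1`) and `k(·, b)` is Lipschitz on
`[λ₀, ∞)`. So the second part has derivative `0`, and
`J'(ϑ) = -G'(ϑ₀ - ϑ) = -k(S + λ₀, λ₀) = λ₀ ln(1 + S/λ₀) - S`, which is negative since
`ln(1 + y) < y` for `y > 0`. -/

section Psi

variable {δ κ : ℝ}

lemma psi_eq_zero (hδ : 0 < δ) {x : ℝ} (hx : x ≤ 0) : psi δ κ x = 0 := by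
  rw [psi, if_neg (by linarith), if_neg (by linarith)]

lemma psi_eq_one {x : ℝ} (hx : δ ≤ x) : psi δ κ x = 1 := if_pos hx

lemma psi_nonneg (x : ℝ) : 0 ≤ psi δ κ x := by
  unfold psi
  split_ifs with h1 h2
  · exact zero_le_one
  · exact rpow_nonneg (div_nonneg h2.le (by linarith)) κ
  · exact le_rfl

lemma psi_le_one (hκ : 0 ≤ κ) (x : ℝ) : psi δ κ x ≤ 1 := by
  unfold psi
  split_ifs with h1 h2
  · exact le_rfl
  · exact rpow_le_one (div_nonneg h2.le (by linarith))
      (div_le_one_of_le₀ (le_of_not_ge h1) (by linarith)) hκ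
  · exact zero_le_one

lemma min_div_le_psi (hδ : 0 < δ) (hκ : κ ≤ 1) (x : ℝ) : min x δ / δ ≤ psi δ κ x := by
  unfold psi
  split_ifs with h1 h2
  · exact div_le_one_of_le₀ (min_le_right _ _) hδ.le
  · rw [min_eq_left (le_of_not_ge h1)]
    calc x / δ = (x / δ) ^ (1 : ℝ) := (rpow_one _).symm
      _ ≤ (x / δ) ^ κ := rpow_le_rpow_of_exponent_ge (div_pos h2 hδ)
          (div_le_one_of_le₀ (le_of_not_ge h1) hδ.le) hκ
  · exact div_nonpos_of_nonpos_of_nonneg ((min_le_left _ _).trans (le_of_not_gt h2)) hδ.le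

lemma continuous_psi (hδ : 0 < δ) (hκ : 0 < κ) : Continuous (psi δ κ) := by
  have h : psi δ κ = fun x => min 1 ((max x 0 / δ) ^ κ) := by
    funext x
    unfold psi
    split_ifs with h1 h2
    · rw [max_eq_left (hδ.le.trans h1), eq_comm, min_eq_left]
      exact one_le_rpow ((one_le_div hδ).2 h1) hκ.le
    · rw [max_eq_left h2.le, min_eq_right]
      exact rpow_le_one (div_nonneg h2.le hδ.le) (div_le_one_of_le₀ (le_of_not_ge h1) hδ.le) hκ.le
    · rw [max_eq_right (le_of_not_gt h2), zero_div, zero_rpow hκ.ne', min_eq_right zero_le_one]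
  rw [h]
  exact continuous_const.min
    (((continuous_id.max continuous_const).div_const δ).rpow_const fun _ => Or.inr hκ.le)

end Psi

section Intensity

variable {S lam0 δ κ : ℝ}

lemma le_lamT (hS : 0 ≤ S) (ϑ t : ℝ) : lam0 ≤ lamT S lam0 δ κ ϑ t :=
  le_add_of_nonneg_left (mul_nonneg hS (psi_nonneg _))

lemma lamT_le (hS : 0 ≤ S) (hκ : 0 ≤ κ) (ϑ t : ℝ) : lamT S lam0 δ κ ϑ t ≤ S + lam0 := by
  have := mul_le_mul_of_nonneg_left (psi_le_one (δ := δ) hκ (t - ϑ)) hS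
  rw [lamT]
  linarith

lemma continuous_lamT (hδ : 0 < δ) (hκ : 0 < κ) (S lam0 ϑ : ℝ) :
    Continuous (lamT S lam0 δ κ ϑ) :=
  (continuous_const.mul ((continuous_psi hδ hκ).comp (continuous_sub_right ϑ))).add
    continuous_const

lemma abs_lamT_sub_le (hS : 0 ≤ S) (hδ : 0 < δ) (hκ0 : 0 ≤ κ) (hκ1 : κ ≤ 1) {ϑ t c : ℝ}
    (hct : c ≤ t - ϑ) (hcδ : c ≤ δ) :
    |lamT S lam0 δ κ ϑ t - (S + lam0)| ≤ S * (1 - c / δ) := by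
  have hpsi : c / δ ≤ psi δ κ (t - ϑ) :=
    (div_le_div_of_nonneg_right (le_min hct hcδ) hδ.le).trans (min_div_le_psi hδ hκ1 _)
  rw [abs_of_nonpos (sub_nonpos.2 (lamT_le hS hκ0 ϑ t)), lamT]
  nlinarith

end Intensity

section KLDensity

noncomputable def klDensity (a b : ℝ) : ℝ := (a / b - 1 - log (a / b)) * b

lemma klDensity_eq {a b : ℝ} (ha : 0 < a) (hb : 0 < b) :
    klDensity a b = a - b - b * (log a - log b) := by
  rw [klDensity, log_div ha.ne' hb.ne']
  field_simp

lemma klDensity_add_left {S lam0 : ℝ} (hlam0 : lam0 ≠ 0) :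
    klDensity (S + lam0) lam0 = S - lam0 * log (1 + S / lam0) := by
  rw [klDensity, add_div, div_self hlam0, add_comm (S / lam0)]
  field_simp
  ring

lemma abs_log_sub_log_le {m a b : ℝ} (hm : 0 < m) (ha : m ≤ a) (hb : m ≤ b) :
    |log a - log b| ≤ |a - b| / m := by
  wlog hba : b ≤ a generalizing a b
  · rw [abs_sub_comm, abs_sub_comm a]
    exact this hb ha (le_of_not_ge hba)
  have hb0 : 0 < b := hm.trans_le hb
  rw [abs_of_nonneg (sub_nonneg.2 (log_le_log hb0 hba)), abs_of_nonneg (sub_nonneg.2 hba)]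
  calc log a - log b = log (a / b) := (log_div (hb0.trans_le hba).ne' hb0.ne').symm
    _ ≤ a / b - 1 := log_le_sub_one_of_pos (div_pos (hb0.trans_le hba) hb0)
    _ = (a - b) / b := by field_simp
    _ ≤ (a - b) / m := div_le_div_of_nonneg_left (sub_nonneg.2 hba) hm hb

lemma abs_klDensity_sub_le {m a₁ a₂ b : ℝ} (hm : 0 < m) (ha₁ : m ≤ a₁) (ha₂ : m ≤ a₂)
    (hb : 0 < b) :
    |klDensity a₁ b - klDensity a₂ b| ≤ (1 + b / m) * |a₁ - a₂| := by
  rw [klDensity_eq (hm.trans_le ha₁) hb, klDensity_eq (hm.trans_le ha₂) hb]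
  calc |a₁ - b - b * (log a₁ - log b) - (a₂ - b - b * (log a₂ - log b))|
      = |(a₁ - a₂) - b * (log a₁ - log a₂)| := by ring_nf
    _ ≤ |a₁ - a₂| + |b * (log a₁ - log a₂)| := abs_sub _ _
    _ = |a₁ - a₂| + b * |log a₁ - log a₂| := by rw [abs_mul, abs_of_pos hb]
    _ ≤ |a₁ - a₂| + b * (|a₁ - a₂| / m) := by
        gcongr
        exact abs_log_sub_log_le hm ha₁ ha₂
    _ = (1 + b / m) * |a₁ - a₂| := by ring

lemma Continuous.klDensity {α : Type*} [TopologicalSpace α] {f g : α → ℝ} (hf : Continuous f)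
    (hg : Continuous g) (hf0 : ∀ x, f x ≠ 0) (hg0 : ∀ x, g x ≠ 0) :
    Continuous fun x => _root_.klDensity (f x) (g x) := by
  have hdiv : Continuous fun x => f x / g x := hf.div hg hg0
  exact ((hdiv.sub continuous_const).sub
    (hdiv.log fun x => div_ne_zero (hf0 x) (hg0 x))).mul hg

end KLDensity

lemma mul_log_one_add_div_lt {S lam0 : ℝ} (hS : 0 < S) (hlam0 : 0 < lam0) :
    lam0 * log (1 + S / lam0) < S := by
  have hlog : log (1 + S / lam0) < S / lam0 := by
    have := log_lt_sub_one_of_pos (by positivity : 0 < 1 + S / lam0)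
      (by have := div_pos hS hlam0; linarith)
    linarith
  calc lam0 * log (1 + S / lam0) < lam0 * (S / lam0) := mul_lt_mul_of_pos_left hlog hlam0
    _ = S := mul_div_cancel₀ S hlam0.ne'

lemma add_pos_of_div_log_sub_sub_lt {S lam0 h : ℝ} (hS : 0 < S) (hlam0 : 0 < lam0)
    (hH : S / log (1 + S / lam0) - S - lam0 < h) : 0 < S + h := by
  have hlog : 0 < log (1 + S / lam0) := log_pos (by have := div_pos hS hlam0; linarith)
  have : lam0 < S / log (1 + S / lam0) := by
    rw [lt_div_iff₀ hlog]
    exact mul_log_one_add_div_lt hS hlam0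
  linarith

lemma hasDerivAt_zero_of_abs_sub_le_sq {f : ℝ → ℝ} {x₀ M : ℝ}
    (h : ∀ᶠ x in nhds x₀, |f x - f x₀| ≤ M * (x - x₀) ^ 2) : HasDerivAt f 0 x₀ := by
  rw [hasDerivAt_iff_isLittleO]
  simp only [smul_zero, sub_zero]
  refine (Asymptotics.IsBigO.of_bound M ?_).trans_isLittleO
    (Asymptotics.isLittleO_pow_sub_sub x₀ one_lt_two)
  filter_upwards [h] with x hx
  simpa [Real.norm_eq_abs, sq_abs] using hx

lemma norm_integral_le_of_norm_le_of_eq_zero {E : Type*} [NormedAddCommGroup E]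
    [NormedSpace ℝ E] {f : ℝ → E} {a b c C : ℝ} (hac : a ≤ c) (hcb : c ≤ b)
    (hf : IntervalIntegrable f volume a b) (hle : ∀ t ∈ Ioc a c, ‖f t‖ ≤ C)
    (hzero : ∀ t ∈ Icc c b, f t = 0) :
    ‖∫ t in a..b, f t‖ ≤ C * (c - a) := by
  have hc : c ∈ uIcc a b := by rw [uIcc_of_le (hac.trans hcb)]; exact ⟨hac, hcb⟩
  rw [← intervalIntegral.integral_add_adjacent_intervals (b := c)
      (hf.mono_set (uIcc_subset_uIcc_left hc)) (hf.mono_set (uIcc_subset_uIcc_right hc)),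
    intervalIntegral.integral_congr (a := c) (g := fun _ => 0) (by rwa [uIcc_of_le hcb]),
    intervalIntegral.integral_zero, add_zero]
  have := intervalIntegral.norm_integral_le_of_norm_le_const (by rwa [uIoc_of_le hac])
  rwa [abs_of_nonneg (sub_nonneg.2 hac)] at this

section Decomposition

variable {S h lam0 δ κ τ ϑ₀ : ℝ}

noncomputable def cuspIntegral (S lam0 δ κ x : ℝ) : ℝ :=
  ∫ u in (0 : ℝ)..x, klDensity (S * psi δ κ u + lam0) lam0

noncomputable def tailIntegral (S h lam0 δ κ τ ϑ₀ ϑ : ℝ) : ℝ :=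
  ∫ t in ϑ₀..τ, klDensity (lamT S lam0 δ κ ϑ t) (lamR S h lam0 δ κ ϑ₀ t)

lemma lamT_eq_of_le {ϑ t : ℝ} (ht : δ ≤ t - ϑ) : lamT S lam0 δ κ ϑ t = S + lam0 := by
  rw [lamT, psi_eq_one ht, mul_one]

lemma continuous_klDensity_lamR (hδ : 0 < δ) (hκ : 0 < κ) (hSh : 0 ≤ S + h)
    (hlam0 : 0 < lam0) {f : ℝ → ℝ} (hf : Continuous f) (hf0 : ∀ t, 0 < f t) :
    Continuous fun t => klDensity (f t) (lamR S h lam0 δ κ ϑ₀ t) :=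
  -- `lamR S h ⋯` unfolds to `lamT (S + h) ⋯`, so the `lamT` lemmas apply to it.
  hf.klDensity (continuous_lamT hδ hκ (S + h) lam0 ϑ₀) (fun t => (hf0 t).ne')
    fun t => (hlam0.trans_le (le_lamT hSh ϑ₀ t)).ne'

lemma JKL_eq_cuspIntegral_add_tailIntegral (hδ : 0 < δ) (hκ : 0 < κ) (hS : 0 ≤ S)
    (hSh : 0 ≤ S + h) (hlam0 : 0 < lam0) {x : ℝ} (hx : x ≤ ϑ₀) :
    JKL S h lam0 δ κ τ ϑ₀ x =
      cuspIntegral S lam0 δ κ (ϑ₀ - x) + tailIntegral S h lam0 δ κ τ ϑ₀ x := by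
  have hF := continuous_klDensity_lamR (ϑ₀ := ϑ₀) hδ hκ hSh hlam0 (continuous_lamT hδ hκ S lam0 x)
    fun t => hlam0.trans_le (le_lamT hS x t)
  have hcusp : ∫ t in x..ϑ₀, klDensity (lamT S lam0 δ κ x t) (lamR S h lam0 δ κ ϑ₀ t) =
      cuspIntegral S lam0 δ κ (ϑ₀ - x) := by
    calc _ = ∫ t in x..ϑ₀, klDensity (S * psi δ κ (t - x) + lam0) lam0 := by
          refine intervalIntegral.integral_congr fun t ht => ?_
          rw [uIcc_of_le hx] at ht
          simp only [lamT, lamR, psi_eq_zero hδ (sub_nonpos.2 ht.2), mul_zero, zero_add]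
      _ = _ := by
          rw [intervalIntegral.integral_comp_sub_right
            (fun u => klDensity (S * psi δ κ u + lam0) lam0), sub_self]
          rfl
  rw [JKL, min_eq_left hx, tailIntegral, ← hcusp]
  exact (intervalIntegral.integral_add_adjacent_intervals
    (hF.intervalIntegrable x ϑ₀) (hF.intervalIntegrable ϑ₀ τ)).symm

lemma tailIntegral_of_le {x : ℝ} (hx : x ≤ ϑ₀ - δ) (hϑ₀τ : ϑ₀ ≤ τ) :
    tailIntegral S h lam0 δ κ τ ϑ₀ x =
      ∫ t in ϑ₀..τ, klDensity (S + lam0) (lamR S h lam0 δ κ ϑ₀ t) := by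
  refine intervalIntegral.integral_congr fun t ht => ?_
  rw [uIcc_of_le hϑ₀τ] at ht
  simp only [lamT_eq_of_le (show δ ≤ t - x by linarith [ht.1])]

lemma abs_tailIntegral_sub_le (hδ : 0 < δ) (hκ0 : 0 < κ) (hκ1 : κ ≤ 1) (hS : 0 ≤ S)
    (hSh : 0 ≤ S + h) (hlam0 : 0 < lam0) {x : ℝ} (hx : ϑ₀ - δ ≤ x) (hxτ : x + δ ≤ τ) :
    |tailIntegral S h lam0 δ κ τ ϑ₀ x -
        ∫ t in ϑ₀..τ, klDensity (S + lam0) (lamR S h lam0 δ κ ϑ₀ t)| ≤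
      (1 + (S + h + lam0) / lam0) * S / δ * (x - (ϑ₀ - δ)) ^ 2 := by
  have hF := continuous_klDensity_lamR (ϑ₀ := ϑ₀) hδ hκ0 hSh hlam0
    (continuous_lamT hδ hκ0 S lam0 x) fun t => hlam0.trans_le (le_lamT hS x t)
  have hG := continuous_klDensity_lamR (ϑ₀ := ϑ₀) hδ hκ0 hSh hlam0 (f := fun _ => S + lam0)
    continuous_const fun _ => by linarith
  have hle : ∀ t ∈ Ioc ϑ₀ (x + δ),
      ‖klDensity (lamT S lam0 δ κ x t) (lamR S h lam0 δ κ ϑ₀ t) -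
          klDensity (S + lam0) (lamR S h lam0 δ κ ϑ₀ t)‖ ≤
        (1 + (S + h + lam0) / lam0) * (S * (1 - (ϑ₀ - x) / δ)) := by
    intro t ht
    have hR : lamR S h lam0 δ κ ϑ₀ t ≤ S + h + lam0 := lamT_le hSh hκ0.le ϑ₀ t
    calc _ ≤ (1 + lamR S h lam0 δ κ ϑ₀ t / lam0) * |lamT S lam0 δ κ x t - (S + lam0)| :=
          abs_klDensity_sub_le hlam0 (le_lamT hS x t) (by linarith)
            (hlam0.trans_le (le_lamT hSh ϑ₀ t))
      _ ≤ _ := by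
          gcongr
          exact abs_lamT_sub_le hS hδ hκ0.le hκ1 (by linarith [ht.1]) (by linarith)
  have hzero : ∀ t ∈ Icc (x + δ) τ,
      klDensity (lamT S lam0 δ κ x t) (lamR S h lam0 δ κ ϑ₀ t) -
          klDensity (S + lam0) (lamR S h lam0 δ κ ϑ₀ t) = 0 := fun t ht => by
    rw [lamT_eq_of_le (by linarith [ht.1]), sub_self]
  have := norm_integral_le_of_norm_le_of_eq_zero (by linarith) hxτ
    ((hF.sub hG).intervalIntegrable ϑ₀ τ) hle hzero
  rw [tailIntegral, ← intervalIntegral.integral_sub (hF.intervalIntegrable _ _)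
    (hG.intervalIntegrable _ _), ← Real.norm_eq_abs]
  exact this.trans_eq (by field_simp; ring)

lemma hasDerivAt_tailIntegral (hδ : 0 < δ) (hκ0 : 0 < κ) (hκ1 : κ ≤ 1) (hS : 0 ≤ S)
    (hSh : 0 ≤ S + h) (hlam0 : 0 < lam0) {ϑ : ℝ} (hϑ : ϑ ≤ ϑ₀ - δ) (hτ : ϑ₀ + δ ≤ τ) :
    HasDerivAt (tailIntegral S h lam0 δ κ τ ϑ₀) 0 ϑ := by
  have hM : 0 ≤ (1 + (S + h + lam0) / lam0) * S / δ := by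
    have : 0 ≤ (S + h + lam0) / lam0 := div_nonneg (by linarith) hlam0.le
    positivity
  apply hasDerivAt_zero_of_abs_sub_le_sq (M := (1 + (S + h + lam0) / lam0) * S / δ)
  filter_upwards [Iio_mem_nhds (show ϑ < ϑ₀ by linarith)] with x (hx : x < ϑ₀)
  rw [tailIntegral_of_le hϑ (by linarith)]
  rcases le_or_gt x (ϑ₀ - δ) with hx' | hx'
  · rw [tailIntegral_of_le hx' (by linarith), sub_self, abs_zero]
    positivity
  · calc _ ≤ _ := abs_tailIntegral_sub_le hδ hκ0 hκ1 hS hSh hlam0 hx'.le (by linarith)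
      _ ≤ _ := by gcongr

lemma hasDerivAt_cuspIntegral_sub (hδ : 0 < δ) (hκ : 0 < κ) (hS : 0 ≤ S) (hlam0 : 0 < lam0)
    (c x : ℝ) :
    HasDerivAt (fun y => cuspIntegral S lam0 δ κ (c - y))
      (-klDensity (S * psi δ κ (c - x) + lam0) lam0) x := by
  have hg : Continuous fun u => klDensity (S * psi δ κ u + lam0) lam0 :=
    ((continuous_const.mul (continuous_psi hδ hκ)).add continuous_const).klDensity
      continuous_const (fun u => (add_pos_of_nonneg_of_pos (mul_nonneg hS (psi_nonneg u))
        hlam0).ne') fun _ => hlam0.ne'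
  have := (hg.integral_hasStrictDerivAt 0 (c - x)).hasDerivAt.comp x
    ((hasDerivAt_id x).const_sub c)
  rwa [mul_neg_one] at this

end Decomposition

theorem stmt_0_general (S lam0 δ τ κ α β ϑ₀ h : ℝ)
    (hS : 0 < S) (hlam0 : 0 < lam0) (hδ : 0 < δ)
    (hκ : κ ∈ Set.Ioo (0 : ℝ) (1 / 2))
    (hΘ : Set.Ioo (α - δ) (β + δ) ⊆ Set.Ioo 0 (τ - δ))
    (hϑ₀ : ϑ₀ ∈ Set.Ioo α β)
    (hH : S / Real.log (1 + S / lam0) - S - lam0 < h) :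
    ∀ ϑ ∈ Set.Ioo (α - δ) (β + δ), ϑ ≤ ϑ₀ - δ →
      HasDerivAt (JKL S h lam0 δ κ τ ϑ₀) (lam0 * Real.log (1 + S / lam0) - S) ϑ ∧
        lam0 * Real.log (1 + S / lam0) - S < 0 := by
  intro ϑ _ hϑ
  obtain ⟨hκ0, hκ1⟩ : 0 < κ ∧ κ ≤ 1 := ⟨hκ.1, by linarith [hκ.2]⟩
  have hSh := (add_pos_of_div_log_sub_sub_lt hS hlam0 hH).le
  have hτ : ϑ₀ + δ ≤ τ := by linarith [(hΘ (show ϑ₀ ∈ Ioo (α - δ) (β + δ) from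
    ⟨by linarith [hϑ₀.1], by linarith [hϑ₀.2]⟩)).2]
  refine ⟨?_, sub_neg.2 (mul_log_one_add_div_lt hS hlam0)⟩
  have hJ : JKL S h lam0 δ κ τ ϑ₀ =ᶠ[nhds ϑ]
      fun x => cuspIntegral S lam0 δ κ (ϑ₀ - x) + tailIntegral S h lam0 δ κ τ ϑ₀ x := by
    filter_upwards [Iic_mem_nhds (show ϑ < ϑ₀ by linarith)] with x hx
    exact JKL_eq_cuspIntegral_add_tailIntegral hδ hκ0 hS.le hSh hlam0 hx
  have hJ' := (hasDerivAt_cuspIntegral_sub hδ hκ0 hS.le hlam0 ϑ₀ ϑ).add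
    (hasDerivAt_tailIntegral hδ hκ0 hκ1 hS.le hSh hlam0 hϑ hτ)
  rw [psi_eq_one (by linarith), mul_one, klDensity_add_left hlam0.ne', add_zero, neg_sub] at hJ'
  exact hJ'.congr_of_eventuallyEq hJ

theorem stmt_0 (S lam0 δ τ κ α β ϑ₀ h : ℝ)
    (hS : 0 < S) (hlam0 : 0 < lam0) (hδ : 0 < δ) (hτ : 0 < τ)
    (hκ : κ ∈ Set.Ioo (0 : ℝ) (1 / 2)) (hαβ : α < β)
    (hΘ : Set.Ioo (α - δ) (β + δ) ⊆ Set.Ioo 0 (τ - δ))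
    (hϑ₀ : ϑ₀ ∈ Set.Ioo α β)
    (hH : S / Real.log (1 + S / lam0) - S - lam0 < h) :
    ∀ ϑ ∈ Set.Ioo (α - δ) (β + δ), ϑ ≤ ϑ₀ - δ →
      HasDerivAt (JKL S h lam0 δ κ τ ϑ₀) (lam0 * Real.log (1 + S / lam0) - S) ϑ ∧
        lam0 * Real.log (1 + S / lam0) - S < 0 :=
  stmt_0_general S lam0 δ τ κ α β ϑ₀ h hS hlam0 hδ hκ hΘ hϑ₀ hH
end

section
/- Suppose h ∈ 𝓗. Then J″(ϑ) tends to +∞ as ϑ → ϑ₀ from the left and as ϑ → ϑ₀ from the right; equivalently, lim_{ε → 0⁺} ∫_{ε}^{1} x^{κ−1}·(x − ε)^{κ−1}/(S·x^κ + λ₀) dx = +∞ (indeed ∫_{0}^{1} x^{2κ−2}/(S·x^κ + λ₀) dx = +∞, since 2κ − 2 < −1). -/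
open MeasureTheory Real Set Filter

/-- Integrability of the left-side integrand on `[ε, 1]`. -/
lemma aux_integ_left {S lam0 κ : ℝ} (hS : 0 < S) (hlam0 : 0 < lam0)
    (hκ0 : 0 < κ) (hκ1 : κ < 1) {ε : ℝ} (hε : 0 < ε) (hε1 : ε ≤ 1) :
    IntervalIntegrable (fun x => x ^ (κ - 1) * (x - ε) ^ (κ - 1) / (S * x ^ κ + lam0))
      volume ε 1 := by
  have hg : IntervalIntegrable (fun x => ε ^ (κ - 1) / lam0 * (x - ε) ^ (κ - 1)) volume ε 1 := by
    have h1 := (intervalIntegral.intervalIntegrable_rpow' (a := 0) (b := 1 - ε) (r := κ - 1)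
      (by linarith)).comp_sub_right ε
    simp only [zero_add, sub_add_cancel] at h1
    exact h1.const_mul _
  refine hg.mono_fun ?_ ?_
  · apply Measurable.aestronglyMeasurable
    fun_prop
  · rw [uIoc_of_le hε1]
    filter_upwards [ae_restrict_mem measurableSet_Ioc] with x hx
    have hx0 : 0 < x := hε.trans hx.1
    have hxe : 0 < x - ε := sub_pos.2 hx.1
    have hden : 0 < S * x ^ κ + lam0 := by
      have := Real.rpow_nonneg hx0.le κ
      nlinarith
    have hnum : 0 ≤ x ^ (κ - 1) * (x - ε) ^ (κ - 1) :=
      mul_nonneg (Real.rpow_nonneg hx0.le _) (Real.rpow_nonneg hxe.le _)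
    rw [Real.norm_eq_abs, Real.norm_eq_abs, abs_of_nonneg (div_nonneg hnum hden.le),
      abs_of_nonneg (by positivity)]
    have h1 : x ^ (κ - 1) ≤ ε ^ (κ - 1) :=
      Real.rpow_le_rpow_of_nonpos hε hx.1.le (by linarith)
    calc x ^ (κ - 1) * (x - ε) ^ (κ - 1) / (S * x ^ κ + lam0)
        ≤ ε ^ (κ - 1) * (x - ε) ^ (κ - 1) / lam0 := by
          apply div_le_div₀ (by positivity)
            (mul_le_mul_of_nonneg_right h1 (Real.rpow_nonneg hxe.le _)) hlam0
          nlinarith [Real.rpow_nonneg hx0.le κ]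
      _ = ε ^ (κ - 1) / lam0 * (x - ε) ^ (κ - 1) := by ring

/-- Lower bound for the left-side integral. -/
lemma aux_lower_left {S lam0 κ : ℝ} (hS : 0 < S) (hlam0 : 0 < lam0)
    (hκ0 : 0 < κ) (hκ1 : κ < 1 / 2) {ε : ℝ} (hε : 0 < ε) (hε1 : ε < 1) :
    (ε ^ (2 * κ - 1) - 1) / ((1 - 2 * κ) * (S + lam0)) ≤
      ∫ x in ε..1, x ^ (κ - 1) * (x - ε) ^ (κ - 1) / (S * x ^ κ + lam0) := by
  have h0uIcc : (0 : ℝ) ∉ Set.uIcc ε 1 := by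
    rw [uIcc_of_le hε1.le, mem_Icc]; push_neg; intro h; linarith
  have hgI : IntervalIntegrable (fun x => x ^ (2 * κ - 2) / (S + lam0)) volume ε 1 :=
    (intervalIntegral.intervalIntegrable_rpow (Or.inr h0uIcc)).div_const _
  have key : ∫ x in ε..1, x ^ (2 * κ - 2) / (S + lam0) ≤
      ∫ x in ε..1, x ^ (κ - 1) * (x - ε) ^ (κ - 1) / (S * x ^ κ + lam0) := by
    rw [intervalIntegral.integral_of_le hε1.le, intervalIntegral.integral_of_le hε1.le]
    refine setIntegral_mono_on hgI.1 ((aux_integ_left hS hlam0 hκ0 (by linarith) hε hε1.le).1)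
      measurableSet_Ioc ?_
    intro x hx
    have hx0 : 0 < x := hε.trans hx.1
    have hxe : 0 < x - ε := sub_pos.2 hx.1
    have e1 : x ^ (2 * κ - 2) = x ^ (κ - 1) * x ^ (κ - 1) := by
      rw [← Real.rpow_add hx0]; ring_nf
    have h2 : x ^ (κ - 1) ≤ (x - ε) ^ (κ - 1) :=
      Real.rpow_le_rpow_of_nonpos hxe (by linarith) (by linarith)
    have h3 : S * x ^ κ + lam0 ≤ S + lam0 := by
      have : x ^ κ ≤ 1 := Real.rpow_le_one hx0.le hx.2 hκ0.le
      nlinarith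
    have hden : 0 < S * x ^ κ + lam0 := by
      have := Real.rpow_nonneg hx0.le κ; nlinarith
    rw [e1]
    apply div_le_div₀ (mul_nonneg (Real.rpow_nonneg hx0.le _) (Real.rpow_nonneg hxe.le _))
      (mul_le_mul_of_nonneg_left h2 (Real.rpow_nonneg hx0.le _)) hden h3
  have comp : ∫ x in ε..1, x ^ (2 * κ - 2) / (S + lam0) =
      ((1 - ε ^ (2 * κ - 1)) / (2 * κ - 1)) / (S + lam0) := by
    rw [intervalIntegral.integral_div, integral_rpow (Or.inr ⟨by intro hc; rw [show (2:ℝ) * κ - 2 = -1 ↔ κ = 1/2 by constructor <;> intro <;> linarith] at hc; linarith, h0uIcc⟩)]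
    rw [show (2:ℝ) * κ - 2 + 1 = 2 * κ - 1 by ring, Real.one_rpow]
  refine le_trans (le_of_eq ?_) (comp ▸ key)
  rw [div_div, show (1 - 2*κ) * (S + lam0) = -((2*κ - 1) * (S + lam0)) by ring, div_neg,
    ← neg_div, neg_sub]

/-- Integrability of the right-side integrand on `[0, 1-ε]`. -/
lemma aux_integ_right {S lam0 κ : ℝ} (hS : 0 < S) (hlam0 : 0 < lam0)
    (hκ0 : 0 < κ) (hκ1 : κ < 1) {ε : ℝ} (hε : 0 < ε) (hε1 : ε < 1) :
    IntervalIntegrable (fun x => x ^ (κ - 1) * (x + ε) ^ (κ - 1) / (S * x ^ κ + lam0))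
      volume 0 (1 - ε) := by
  have hg : IntervalIntegrable (fun x => ε ^ (κ - 1) / lam0 * x ^ (κ - 1)) volume 0 (1 - ε) :=
    (intervalIntegral.intervalIntegrable_rpow' (by linarith)).const_mul _
  refine hg.mono_fun ?_ ?_
  · apply Measurable.aestronglyMeasurable
    fun_prop
  · rw [uIoc_of_le (by linarith)]
    filter_upwards [ae_restrict_mem measurableSet_Ioc] with x hx
    have hx0 : 0 < x := hx.1
    have hxe : 0 < x + ε := by linarith
    have hden : 0 < S * x ^ κ + lam0 := by
      have := Real.rpow_nonneg hx0.le κ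
      nlinarith
    have hnum : 0 ≤ x ^ (κ - 1) * (x + ε) ^ (κ - 1) :=
      mul_nonneg (Real.rpow_nonneg hx0.le _) (Real.rpow_nonneg hxe.le _)
    rw [Real.norm_eq_abs, Real.norm_eq_abs, abs_of_nonneg (div_nonneg hnum hden.le),
      abs_of_nonneg (by positivity)]
    have h1 : (x + ε) ^ (κ - 1) ≤ ε ^ (κ - 1) :=
      Real.rpow_le_rpow_of_nonpos hε (by linarith) (by linarith)
    calc x ^ (κ - 1) * (x + ε) ^ (κ - 1) / (S * x ^ κ + lam0)
        ≤ ε ^ (κ - 1) * x ^ (κ - 1) / lam0 := by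
          apply div_le_div₀ (by positivity) ?_ hlam0 (by nlinarith [Real.rpow_nonneg hx0.le κ])
          rw [mul_comm (ε ^ (κ - 1))]
          exact mul_le_mul_of_nonneg_left h1 (Real.rpow_nonneg hx0.le _)
      _ = ε ^ (κ - 1) / lam0 * x ^ (κ - 1) := by ring

/-- Lower bound for the right-side integral. -/
lemma aux_lower_right {S lam0 κ : ℝ} (hS : 0 < S) (hlam0 : 0 < lam0)
    (hκ0 : 0 < κ) (hκ1 : κ < 1 / 2) {ε : ℝ} (hε : 0 < ε) (hε1 : ε < 1 / 2) :
    (2 : ℝ) ^ (κ - 1) * ((ε ^ (2 * κ - 1) - (1 / 2 : ℝ) ^ (2 * κ - 1)) / (1 - 2 * κ)) / (S + lam0)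
      ≤ ∫ x in (0 : ℝ)..(1 - ε), x ^ (κ - 1) * (x + ε) ^ (κ - 1) / (S * x ^ κ + lam0) := by
  have hεε : ε < 1 - ε := by linarith
  have h1ε : 0 < 1 - ε := by linarith
  have hI0 : IntegrableOn (fun x => x ^ (κ - 1) * (x + ε) ^ (κ - 1) / (S * x ^ κ + lam0))
      (Ioc 0 (1 - ε)) volume :=
    (aux_integ_right hS hlam0 hκ0 (by linarith) hε (by linarith)).1
  have h0uIcc : (0 : ℝ) ∉ Set.uIcc ε (1 - ε) := by
    rw [uIcc_of_le hεε.le, mem_Icc]; push_neg; intro h; linarith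
  have hnonneg : 0 ≤ᶠ[ae (volume.restrict (Ioc (0:ℝ) (1 - ε)))]
      fun x => x ^ (κ - 1) * (x + ε) ^ (κ - 1) / (S * x ^ κ + lam0) := by
    filter_upwards [ae_restrict_mem measurableSet_Ioc] with x hx
    have hx0 : 0 < x := hx.1
    have hden : 0 < S * x ^ κ + lam0 := by
      have := Real.rpow_nonneg hx0.le κ; nlinarith
    exact div_nonneg (mul_nonneg (Real.rpow_nonneg hx0.le _)
      (Real.rpow_nonneg (by linarith) _)) hden.le
  have step1 : ∫ x in Ioc ε (1 - ε), x ^ (κ - 1) * (x + ε) ^ (κ - 1) / (S * x ^ κ + lam0)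
      ≤ ∫ x in Ioc 0 (1 - ε), x ^ (κ - 1) * (x + ε) ^ (κ - 1) / (S * x ^ κ + lam0) :=
    setIntegral_mono_set hI0 hnonneg (HasSubset.Subset.eventuallyLE (Ioc_subset_Ioc_left hε.le))
  have hgI : IntervalIntegrable (fun x => (2:ℝ) ^ (κ - 1) * x ^ (2 * κ - 2) / (S + lam0))
      volume ε (1 - ε) :=
    ((intervalIntegral.intervalIntegrable_rpow (Or.inr h0uIcc)).const_mul _).div_const _
  have step2 : ∫ x in Ioc ε (1 - ε), (2:ℝ) ^ (κ - 1) * x ^ (2 * κ - 2) / (S + lam0)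
      ≤ ∫ x in Ioc ε (1 - ε), x ^ (κ - 1) * (x + ε) ^ (κ - 1) / (S * x ^ κ + lam0) := by
    refine setIntegral_mono_on hgI.1 (hI0.mono_set (Ioc_subset_Ioc_left hε.le))
      measurableSet_Ioc ?_
    intro x hx
    have hx0 : 0 < x := hε.trans hx.1
    have hxe : 0 < x + ε := by linarith
    have e1 : x ^ (2 * κ - 2) = x ^ (κ - 1) * x ^ (κ - 1) := by
      rw [← Real.rpow_add hx0]; ring_nf
    have h2 : (2 * x) ^ (κ - 1) ≤ (x + ε) ^ (κ - 1) :=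
      Real.rpow_le_rpow_of_nonpos hxe (by linarith [hx.1]) (by linarith)
    have hmul : (2 * x) ^ (κ - 1) = 2 ^ (κ - 1) * x ^ (κ - 1) :=
      Real.mul_rpow (by norm_num) hx0.le
    have h3 : S * x ^ κ + lam0 ≤ S + lam0 := by
      have : x ^ κ ≤ 1 := Real.rpow_le_one hx0.le (by linarith [hx.2]) hκ0.le
      nlinarith
    have hden : 0 < S * x ^ κ + lam0 := by
      have := Real.rpow_nonneg hx0.le κ; nlinarith
    calc (2:ℝ) ^ (κ - 1) * x ^ (2 * κ - 2) / (S + lam0)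
        = x ^ (κ - 1) * (2 ^ (κ - 1) * x ^ (κ - 1)) / (S + lam0) := by rw [e1]; ring
      _ ≤ x ^ (κ - 1) * (x + ε) ^ (κ - 1) / (S * x ^ κ + lam0) := by
          rw [← hmul]
          exact div_le_div₀ (mul_nonneg (Real.rpow_nonneg hx0.le _)
            (Real.rpow_nonneg hxe.le _))
            (mul_le_mul_of_nonneg_left h2 (Real.rpow_nonneg hx0.le _)) hden h3
  have comp : ∫ x in Ioc ε (1 - ε), (2:ℝ) ^ (κ - 1) * x ^ (2 * κ - 2) / (S + lam0)
      = (2:ℝ) ^ (κ - 1) * (((1 - ε) ^ (2 * κ - 1) - ε ^ (2 * κ - 1)) / (2 * κ - 1)) / (S + lam0) := by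
    rw [← intervalIntegral.integral_of_le hεε.le, intervalIntegral.integral_div,
      intervalIntegral.integral_const_mul,
      integral_rpow (Or.inr ⟨by intro hc; linarith, h0uIcc⟩),
      show (2:ℝ) * κ - 2 + 1 = 2 * κ - 1 by ring]
  have hhalf : (1 - ε) ^ (2 * κ - 1) ≤ (1 / 2 : ℝ) ^ (2 * κ - 1) :=
    Real.rpow_le_rpow_of_nonpos (by norm_num) (by linarith) (by linarith)
  have trans1 : (2 : ℝ) ^ (κ - 1) * ((ε ^ (2 * κ - 1) - (1 / 2 : ℝ) ^ (2 * κ - 1)) / (1 - 2 * κ))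
        / (S + lam0)
      ≤ (2:ℝ) ^ (κ - 1) * (((1 - ε) ^ (2 * κ - 1) - ε ^ (2 * κ - 1)) / (2 * κ - 1)) / (S + lam0) := by
    have e2 : ((1 - ε) ^ (2 * κ - 1) - ε ^ (2 * κ - 1)) / (2 * κ - 1)
        = (ε ^ (2 * κ - 1) - (1 - ε) ^ (2 * κ - 1)) / (1 - 2 * κ) := by
      rw [show (1:ℝ) - 2 * κ = -(2 * κ - 1) by ring, div_neg, ← neg_div, neg_sub]
    rw [e2]
    have h4 : (1:ℝ) - 2 * κ > 0 := by linarith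
    have hy : ε ^ (2 * κ - 1) - (1 / 2 : ℝ) ^ (2 * κ - 1)
        ≤ ε ^ (2 * κ - 1) - (1 - ε) ^ (2 * κ - 1) := by linarith
    apply (div_le_div_iff_of_pos_right (by linarith : (0:ℝ) < S + lam0)).mpr
    apply mul_le_mul_of_nonneg_left ?_ (Real.rpow_nonneg (by norm_num) _)
    exact (div_le_div_iff_of_pos_right h4).mpr hy
  calc (2 : ℝ) ^ (κ - 1) * ((ε ^ (2 * κ - 1) - (1 / 2 : ℝ) ^ (2 * κ - 1)) / (1 - 2 * κ)) / (S + lam0)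
      ≤ (2:ℝ) ^ (κ - 1) * (((1 - ε) ^ (2 * κ - 1) - ε ^ (2 * κ - 1)) / (2 * κ - 1)) / (S + lam0) := trans1
    _ = ∫ x in Ioc ε (1 - ε), (2:ℝ) ^ (κ - 1) * x ^ (2 * κ - 2) / (S + lam0) := comp.symm
    _ ≤ ∫ x in Ioc ε (1 - ε), x ^ (κ - 1) * (x + ε) ^ (κ - 1) / (S * x ^ κ + lam0) := step2
    _ ≤ ∫ x in Ioc 0 (1 - ε), x ^ (κ - 1) * (x + ε) ^ (κ - 1) / (S * x ^ κ + lam0) := step1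
    _ = ∫ x in (0:ℝ)..(1 - ε), x ^ (κ - 1) * (x + ε) ^ (κ - 1) / (S * x ^ κ + lam0) :=
        (intervalIntegral.integral_of_le h1ε.le).symm

/-- `ε ^ (2κ - 1) → ∞` as `ε → 0⁺`. -/
lemma aux_tendsto_rpow {κ : ℝ} (hκ1 : κ < 1 / 2) :
    Tendsto (fun ε : ℝ => ε ^ (2 * κ - 1)) (nhdsWithin 0 (Set.Ioi 0)) atTop := by
  have h := (tendsto_rpow_atTop (y := 1 - 2 * κ) (by linarith)).comp tendsto_inv_nhdsGT_zero
  apply h.congr'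
  filter_upwards [self_mem_nhdsWithin] with x hx
  have hx0 : (0:ℝ) < x := hx
  simp only [Function.comp_apply]
  rw [Real.inv_rpow hx0.le, ← Real.rpow_neg hx0.le, show -(1 - 2 * κ) = 2 * κ - 1 by ring]

theorem stmt_9 (S lam0 δ τ κ α β ϑ₀ h : ℝ)
    (hS : 0 < S) (hlam0 : 0 < lam0) (hδ : 0 < δ) (hτ : 0 < τ)
    (hκ : κ ∈ Set.Ioo (0 : ℝ) (1 / 2)) (hαβ : α < β)
    (hΘ : Set.Ioo (α - δ) (β + δ) ⊆ Set.Ioo 0 (τ - δ))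
    (hϑ₀ : ϑ₀ ∈ Set.Ioo α β)
    (hH : S / Real.log (1 + S / lam0) - S - lam0 < h) :
    Tendsto (fun ϑ : ℝ =>
        (S * (S + h) * κ ^ 2 / δ) *
          ∫ x in ((ϑ₀ - ϑ) / δ)..1,
            x ^ (κ - 1) * (x - (ϑ₀ - ϑ) / δ) ^ (κ - 1) / (S * x ^ κ + lam0))
      (nhdsWithin ϑ₀ (Set.Iio ϑ₀)) atTop ∧
    Tendsto (fun ϑ : ℝ =>
        (S * (S + h) * κ ^ 2 / δ) *
          ∫ x in (0 : ℝ)..(1 - (ϑ - ϑ₀) / δ),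
            x ^ (κ - 1) * (x + (ϑ - ϑ₀) / δ) ^ (κ - 1) / (S * x ^ κ + lam0))
      (nhdsWithin ϑ₀ (Set.Ioi ϑ₀)) atTop ∧
    Tendsto (fun ε : ℝ =>
        ∫ x in ε..1, x ^ (κ - 1) * (x - ε) ^ (κ - 1) / (S * x ^ κ + lam0))
      (nhdsWithin 0 (Set.Ioi 0)) atTop ∧
    (∫⁻ x in Set.Ioo (0 : ℝ) 1,
        ENNReal.ofReal (x ^ (2 * κ - 2) / (S * x ^ κ + lam0))) = ⊤ := by
  obtain ⟨hκ0, hκ1⟩ := hκ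
  -- S + h > 0
  have hu : 0 < S / lam0 := div_pos hS hlam0
  have hlog0 : 0 < Real.log (1 + S / lam0) := Real.log_pos (by linarith)
  have hlog : Real.log (1 + S / lam0) < S / lam0 := by
    have := Real.log_lt_sub_one_of_pos (by linarith : (0:ℝ) < 1 + S / lam0)
      (by intro hc; rw [add_eq_left] at hc; linarith)
    linarith
  have hSh : 0 < S + h := by
    have h1 : S / (S / lam0) < S / Real.log (1 + S / lam0) :=
      div_lt_div_of_pos_left hS hlog0 hlog
    have h2 : S / (S / lam0) = lam0 := by field_simp
    rw [h2] at h1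
    linarith
  have hC : 0 < S * (S + h) * κ ^ 2 / δ := by positivity
  have hM : 0 < S + lam0 := by linarith
  -- conjunct 3
  have T3 : Tendsto (fun ε : ℝ =>
      ∫ x in ε..1, x ^ (κ - 1) * (x - ε) ^ (κ - 1) / (S * x ^ κ + lam0))
      (nhdsWithin 0 (Set.Ioi 0)) atTop := by
    have hb : Tendsto (fun ε : ℝ => (ε ^ (2 * κ - 1) - 1) / ((1 - 2 * κ) * (S + lam0)))
        (nhdsWithin 0 (Set.Ioi 0)) atTop := by
      have h1 := (tendsto_atTop_add_const_right _ (-1) (aux_tendsto_rpow hκ1)).atTop_mul_const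
        (r := ((1 - 2 * κ) * (S + lam0))⁻¹) (inv_pos.2 (by nlinarith))
      apply h1.congr
      intro ε
      ring
    refine tendsto_atTop_mono' _ ?_ hb
    filter_upwards [Ioo_mem_nhdsGT_of_mem (by constructor <;> norm_num :
      (0:ℝ) ∈ Set.Ico (0:ℝ) 1)] with ε hε
    exact aux_lower_left hS hlam0 hκ0 hκ1 hε.1 hε.2
  -- right-side divergence
  have TR : Tendsto (fun ε : ℝ =>
      ∫ x in (0:ℝ)..(1 - ε), x ^ (κ - 1) * (x + ε) ^ (κ - 1) / (S * x ^ κ + lam0))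
      (nhdsWithin 0 (Set.Ioi 0)) atTop := by
    have hb : Tendsto (fun ε : ℝ =>
        (2:ℝ) ^ (κ - 1) * ((ε ^ (2 * κ - 1) - (1 / 2 : ℝ) ^ (2 * κ - 1)) / (1 - 2 * κ)) / (S + lam0))
        (nhdsWithin 0 (Set.Ioi 0)) atTop := by
      have h1 := (tendsto_atTop_add_const_right _ (-((1 / 2 : ℝ) ^ (2 * κ - 1)))
        (aux_tendsto_rpow hκ1)).atTop_mul_const
        (r := (2:ℝ) ^ (κ - 1) / (1 - 2 * κ) / (S + lam0))
        (by
          have : (0:ℝ) < (2:ℝ) ^ (κ - 1) := Real.rpow_pos_of_pos (by norm_num) _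
          have h2 : (0:ℝ) < 1 - 2 * κ := by linarith
          positivity)
      apply h1.congr
      intro ε
      ring
    refine tendsto_atTop_mono' _ ?_ hb
    filter_upwards [Ioo_mem_nhdsGT_of_mem (by constructor <;> norm_num :
      (0:ℝ) ∈ Set.Ico (0:ℝ) (1/2))] with ε hε
    exact aux_lower_right hS hlam0 hκ0 hκ1 hε.1 hε.2
  -- maps
  have hmapL : Tendsto (fun ϑ : ℝ => (ϑ₀ - ϑ) / δ) (nhdsWithin ϑ₀ (Set.Iio ϑ₀))
      (nhdsWithin 0 (Set.Ioi 0)) := by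
    rw [tendsto_nhdsWithin_iff]
    constructor
    · have hc : Continuous fun ϑ : ℝ => (ϑ₀ - ϑ) / δ := by fun_prop
      have := hc.tendsto ϑ₀
      rw [show (ϑ₀ - ϑ₀) / δ = 0 by simp] at this
      exact this.mono_left nhdsWithin_le_nhds
    · filter_upwards [self_mem_nhdsWithin] with ϑ hϑ
      exact Set.mem_Ioi.2 (div_pos (sub_pos.2 hϑ) hδ)
  have hmapR : Tendsto (fun ϑ : ℝ => (ϑ - ϑ₀) / δ) (nhdsWithin ϑ₀ (Set.Ioi ϑ₀))
      (nhdsWithin 0 (Set.Ioi 0)) := by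
    rw [tendsto_nhdsWithin_iff]
    constructor
    · have hc : Continuous fun ϑ : ℝ => (ϑ - ϑ₀) / δ := by fun_prop
      have := hc.tendsto ϑ₀
      rw [show (ϑ₀ - ϑ₀) / δ = 0 by simp] at this
      exact this.mono_left nhdsWithin_le_nhds
    · filter_upwards [self_mem_nhdsWithin] with ϑ hϑ
      exact Set.mem_Ioi.2 (div_pos (sub_pos.2 hϑ) hδ)
  refine ⟨Tendsto.const_mul_atTop hC (T3.comp hmapL),
    Tendsto.const_mul_atTop hC (TR.comp hmapR), T3, ?_⟩
  -- conjunct 4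
  by_contra hne
  have ht : (∫⁻ x in Set.Ioo (0 : ℝ) 1,
      ENNReal.ofReal (x ^ (2 * κ - 2) / (S * x ^ κ + lam0))) < ⊤ := lt_top_iff_ne_top.2 hne
  have hnn : 0 ≤ᶠ[ae (volume.restrict (Set.Ioo (0:ℝ) 1))]
      fun x : ℝ => x ^ (2 * κ - 2) / (S * x ^ κ + lam0) := by
    filter_upwards [ae_restrict_mem measurableSet_Ioo] with x hx
    have hden : 0 < S * x ^ κ + lam0 := by
      have := Real.rpow_nonneg hx.1.le κ; nlinarith
    exact div_nonneg (Real.rpow_nonneg hx.1.le _) hden.le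
  have hint : IntegrableOn (fun x : ℝ => x ^ (2 * κ - 2) / (S * x ^ κ + lam0))
      (Set.Ioo (0:ℝ) 1) volume := by
    refine ⟨(by fun_prop : Measurable fun x : ℝ =>
      x ^ (2 * κ - 2) / (S * x ^ κ + lam0)).aestronglyMeasurable, ?_⟩
    exact (hasFiniteIntegral_iff_ofReal hnn).2 ht
  have hint2 : IntegrableOn (fun x : ℝ => x ^ (2 * κ - 2)) (Set.Ioo (0:ℝ) 1) volume := by
    refine Integrable.mono (hint.const_mul (S + lam0))
      ((by fun_prop : Measurable fun x : ℝ => x ^ (2 * κ - 2)).aestronglyMeasurable) ?_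
    filter_upwards [ae_restrict_mem measurableSet_Ioo] with x hx
    have hx0 : 0 < x := hx.1
    have hden : 0 < S * x ^ κ + lam0 := by
      have := Real.rpow_nonneg hx0.le κ; nlinarith
    have h3 : S * x ^ κ + lam0 ≤ S + lam0 := by
      have : x ^ κ ≤ 1 := Real.rpow_le_one hx0.le hx.2.le hκ0.le
      nlinarith
    have hq : 0 ≤ x ^ (2 * κ - 2) / (S * x ^ κ + lam0) :=
      div_nonneg (Real.rpow_nonneg hx0.le _) hden.le
    rw [Real.norm_eq_abs, Real.norm_eq_abs, abs_of_nonneg (Real.rpow_nonneg hx0.le _),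
      abs_of_nonneg (by positivity)]
    calc x ^ (2 * κ - 2) = x ^ (2 * κ - 2) / (S * x ^ κ + lam0) * (S * x ^ κ + lam0) := by
          rw [div_mul_cancel₀ _ hden.ne']
      _ ≤ x ^ (2 * κ - 2) / (S * x ^ κ + lam0) * (S + lam0) :=
          mul_le_mul_of_nonneg_left h3 hq
      _ = (S + lam0) * (x ^ (2 * κ - 2) / (S * x ^ κ + lam0)) := by ring
  rw [intervalIntegral.integrableOn_Ioo_rpow_iff zero_lt_one] at hint2
  linarith
end
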